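/- arXiv:2403.02479 — 12 statements merged into one kernel-verified Lean document; each statement's English description precedes it below -/
import Mathlib

section
/- For all integers i,j one has k(i,j) ≡ i + j (mod 2), |k(i+1,j) − k(i,j)| = 1, and |k(i,j+1) − k(i,j)| = 1; that is, the (r,s,t)-slanted height function defines a stepped surface. -/
/-!
Writing `a(i,j) = r i + s j + t (i + j)` and `d = 2t`, the floor in `k` is the integer quotient
`a(i,j) / d`, so `k(i,j) = i + j - 2 (a(i,j) / d)` has the parity of `i + j`. A unit step in `i`
(resp. `j`) adds `r + t` (resp. `s + t`) to `a`, an amount in `[0, d]`; hence the quotient grows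
by `0` or `1` and `k` changes by `+1` or `-1`.
-/

namespace Int

theorem add_ediv_eq_or_eq_add_one {a c d : ℤ} (hd : 0 < d) (hc₀ : 0 ≤ c) (hcd : c ≤ d) :
    (a + c) / d = a / d ∨ (a + c) / d = a / d + 1 := by
  have hlo : a / d ≤ (a + c) / d := Int.ediv_le_ediv hd (by omega)
  have hhi : (a + c) / d ≤ a / d + 1 :=
    calc (a + c) / d ≤ (a + d) / d := Int.ediv_le_ediv hd (by omega)
      _ = a / d + 1 := by simpa using Int.add_mul_ediv_right a 1 hd.ne'
  omega

theorem abs_add_one_sub_two_mul_ediv_step (m : ℤ) {a c d : ℤ} (hd : 0 < d) (hc₀ : 0 ≤ c)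
    (hcd : c ≤ d) : |(m + 1 - 2 * ((a + c) / d)) - (m - 2 * (a / d))| = 1 := by
  rcases add_ediv_eq_or_eq_add_one (a := a) hd hc₀ hcd with h | h <;>
    rw [h, abs_eq (zero_le_one' ℤ)] <;> omega

end Int

/-- The (r,s,t)-slanted height function
`k(i,j) = i + j − 2·⌊(r·i + s·j + t·(i+j))/(2t)⌋` defines a stepped surface:
`k(i,j) ≡ i+j (mod 2)`, `|k(i+1,j) − k(i,j)| = 1`, `|k(i,j+1) − k(i,j)| = 1`. -/
theorem slanted_height_is_stepped_surface
    (r s t : ℤ) (hr0 : 0 ≤ r) (hrt : r < t) (hs0 : 0 ≤ s) (hst : s < t)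
    (k : ℤ → ℤ → ℤ)
    (hk : ∀ i j : ℤ,
      k i j = i + j - 2 * ⌊((r * i + s * j + t * (i + j) : ℤ) : ℚ) / ((2 * t : ℤ) : ℚ)⌋) :
    ∀ i j : ℤ,
      k i j ≡ i + j [ZMOD 2] ∧
      |k (i + 1) j - k i j| = 1 ∧
      |k i (j + 1) - k i j| = 1 := by
  have hd : 0 < 2 * t := by omega
  have hk' : ∀ i j, k i j = i + j - 2 * ((r * i + s * j + t * (i + j)) / (2 * t)) := fun i j => by
    rw [hk, Int.floor_div_cast_of_nonneg hd.le, Int.floor_intCast]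
  intro i j
  refine ⟨?_, ?_, ?_⟩
  · rw [hk', Int.modEq_iff_dvd]
    exact ⟨(r * i + s * j + t * (i + j)) / (2 * t), by ring⟩
  · rw [hk', hk', show r * (i + 1) + s * j + t * (i + 1 + j)
      = r * i + s * j + t * (i + j) + (r + t) by ring, add_right_comm i 1 j]
    exact Int.abs_add_one_sub_two_mul_ediv_step (i + j) hd (by omega) (by omega)
  · rw [hk', hk', show r * i + s * (j + 1) + t * (i + (j + 1))
      = r * i + s * j + t * (i + j) + (s + t) by ring, ← add_assoc]
    exact Int.abs_add_one_sub_two_mul_ediv_step (i + j) hd (by omega) (by omega)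
end

section
/- Assume additionally r ≤ s. Then for all integers i,j: k(i−1,j) − k(i+1,j) ∈ {0,2}, k(i,j−1) − k(i,j+1) ∈ {0,2}, and k(i+1,j) − k(i,j+1) ∈ {0,2}. -/
/-!
Write `k i j = i + j - 2 * ⌊φ i j⌋` with `φ i j = (r i + s j + t (i + j)) / (2t)`. Two reals whose
difference lies in `[m, m + 1)` have floors differing by `m` or `m + 1`. A step of two in `i`
(resp. `j`) moves `φ` by `1 + r / t ∈ [1, 2)` (resp. `1 + s / t`), while `i + j` changes by two;
the step from `(i + 1, j)` to `(i, j + 1)` moves `φ` by `(s - r) / (2t) ∈ [0, 1)`, which is where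
`r ≤ s` enters, while `i + j` is unchanged.
-/

theorem Int.floor_sub_floor_eq_or {α : Type*} [Field α] [LinearOrder α] [IsStrictOrderedRing α]
    [FloorRing α] {x y : α} {m : ℤ} (hle : (m : α) ≤ y - x) (hlt : y - x < m + 1) :
    ⌊y⌋ - ⌊x⌋ = m ∨ ⌊y⌋ - ⌊x⌋ = m + 1 := by
  have hlower : ⌊x⌋ + m ≤ ⌊y⌋ := by
    rw [← Int.floor_add_intCast]
    exact Int.floor_mono (by linarith)
  have hupper : ⌊y⌋ < ⌊x⌋ + m + 2 := by
    rw [Int.floor_lt]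
    push_cast
    linarith [Int.lt_floor_add_one x]
  omega

theorem Int.floor_div_sub_floor_div_eq_or {α : Type*} [Field α] [LinearOrder α]
    [IsStrictOrderedRing α] [FloorRing α] {a b d m : ℤ} (hd : 0 < d) (hle : m * d ≤ b - a)
    (hlt : b - a < (m + 1) * d) :
    ⌊(b : α) / d⌋ - ⌊(a : α) / d⌋ = m ∨ ⌊(b : α) / d⌋ - ⌊(a : α) / d⌋ = m + 1 := by
  have hd' : (0 : α) < d := Int.cast_pos.mpr hd
  apply Int.floor_sub_floor_eq_or
  · rw [← sub_div, le_div_iff₀ hd']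
    exact_mod_cast hle
  · rw [← sub_div, div_lt_iff₀ hd']
    exact_mod_cast hlt

/-- Lemma 2.3: restrictions for (r,s,t)-slanted stepped surfaces, `r ≤ s`:
`k(i−1,j) − k(i+1,j) ∈ {0,2}`, `k(i,j−1) − k(i,j+1) ∈ {0,2}`,
`k(i+1,j) − k(i,j+1) ∈ {0,2}`. -/
theorem slanted_height_restrictions
    (r s t : ℤ) (hr0 : 0 ≤ r) (hrt : r < t) (hs0 : 0 ≤ s) (hst : s < t) (hrs : r ≤ s)
    (k : ℤ → ℤ → ℤ)
    (hk : ∀ i j : ℤ,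
      k i j = i + j - 2 * ⌊((r * i + s * j + t * (i + j) : ℤ) : ℚ) / ((2 * t : ℤ) : ℚ)⌋) :
    ∀ i j : ℤ,
      k (i - 1) j - k (i + 1) j ∈ ({0, 2} : Set ℤ) ∧
      k i (j - 1) - k i (j + 1) ∈ ({0, 2} : Set ℤ) ∧
      k (i + 1) j - k i (j + 1) ∈ ({0, 2} : Set ℤ) := by
  intro i j
  have ht : 0 < 2 * t := by omega
  have hi := Int.floor_div_sub_floor_div_eq_or (α := ℚ) ht (m := 1)
    (a := r * (i - 1) + s * j + t * (i - 1 + j)) (b := r * (i + 1) + s * j + t * (i + 1 + j))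
    (by linarith) (by linarith)
  have hj := Int.floor_div_sub_floor_div_eq_or (α := ℚ) ht (m := 1)
    (a := r * i + s * (j - 1) + t * (i + (j - 1))) (b := r * i + s * (j + 1) + t * (i + (j + 1)))
    (by linarith) (by linarith)
  have hij := Int.floor_div_sub_floor_div_eq_or (α := ℚ) ht (m := 0)
    (a := r * (i + 1) + s * j + t * (i + 1 + j)) (b := r * i + s * (j + 1) + t * (i + (j + 1)))
    (by linarith) (by linarith)
  simp only [hk, Set.mem_insert_iff, Set.mem_singleton_iff]
  omega
end

section
/- Let T, T' : ℤ³ → ℝ be functions that are nonzero at every point with μ(i,j,k) ≥ 0 and that both satisfy the octahedron relation at every (i,j,k) ∈ ℤ³ with μ(i,j,k+1) ≥ 2t. If T(i,j,k) = T'(i,j,k) for every (i,j,k) in the initial-data band, then T(i,j,k) = T'(i,j,k) for every (i,j,k) with μ(i,j,k) ≥ 0; that is, the solution of the T-system is uniquely determined by its values on 2t consecutive (r,s,t)-slanted planes. -/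
/-!
Every point above the band has height `μ(i,j,k+1) ≥ 2t`, and the octahedron relation there
expresses `T(i,j,k+1)·T(i,j,k-1)` through the four points `(i±1,j,k)`, `(i,j±1,k)`. Because
`0 ≤ r, s < t`, these four points and `(i,j,k-1)` have heights in `[0, μ(i,j,k+1))`, so by
strong induction on the height both solutions already agree there, and cancelling the nonzero
factor `T(i,j,k-1)` gives agreement at `(i,j,k+1)`.
-/

theorem nonneg_height_induction {α : Type*} (h : α → ℤ) {P : α → Prop}
    (step : ∀ a, 0 ≤ h a → (∀ b, 0 ≤ h b → h b < h a → P b) → P a) :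
    ∀ a, 0 ≤ h a → P a := by
  intro a
  induction a using (measure fun a => (h a).toNat).wf.induction with
  | _ a ih =>
    exact fun ha => step a ha fun b hb hba => ih b (show (h b).toNat < (h a).toNat by omega) hb

theorem octahedron_top_eq {R : Type*} [Semiring R] [IsRightCancelMulZero R]
    {T T' : ℤ → ℤ → ℤ → R} {i j k : ℤ}
    (hT : T i j (k + 1) * T i j (k - 1)
      = T (i + 1) j k * T (i - 1) j k + T i (j + 1) k * T i (j - 1) k)
    (hT' : T' i j (k + 1) * T' i j (k - 1)
      = T' (i + 1) j k * T' (i - 1) j k + T' i (j + 1) k * T' i (j - 1) k)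
    (hne : T i j (k - 1) ≠ 0) (hbot : T i j (k - 1) = T' i j (k - 1))
    (hi₁ : T (i + 1) j k = T' (i + 1) j k) (hi₂ : T (i - 1) j k = T' (i - 1) j k)
    (hj₁ : T i (j + 1) k = T' i (j + 1) k) (hj₂ : T i (j - 1) k = T' i (j - 1) k) :
    T i j (k + 1) = T' i j (k + 1) := by
  refine mul_right_cancel₀ hne ?_
  rw [hT, hbot, hT', hi₁, hi₂, hj₁, hj₂]

theorem Tsystem_unique_from_slanted_initial_data_general
    (r s t : ℤ) (hr0 : 0 ≤ r) (hrt : r < t) (hs0 : 0 ≤ s) (hst : s < t)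
    (T T' : ℤ → ℤ → ℤ → ℝ)
    (hT0 : ∀ i j k : ℤ, 0 ≤ r * i + s * j + t * k → T i j k ≠ 0)
    (hT : ∀ i j k : ℤ, 2 * t ≤ r * i + s * j + t * (k + 1) →
      T i j (k + 1) * T i j (k - 1)
        = T (i + 1) j k * T (i - 1) j k + T i (j + 1) k * T i (j - 1) k)
    (hT' : ∀ i j k : ℤ, 2 * t ≤ r * i + s * j + t * (k + 1) →
      T' i j (k + 1) * T' i j (k - 1)
        = T' (i + 1) j k * T' (i - 1) j k + T' i (j + 1) k * T' i (j - 1) k)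
    (hinit : ∀ i j k : ℤ, 0 ≤ r * i + s * j + t * k → r * i + s * j + t * k < 2 * t →
      T i j k = T' i j k) :
    ∀ i j k : ℤ, 0 ≤ r * i + s * j + t * k → T i j k = T' i j k := by
  intro i j k hμ
  refine nonneg_height_induction (fun p : ℤ × ℤ × ℤ => r * p.1 + s * p.2.1 + t * p.2.2)
    (P := fun p => T p.1 p.2.1 p.2.2 = T' p.1 p.2.1 p.2.2) ?_ (i, j, k) hμ
  rintro ⟨i, j, k⟩ hμ ih
  by_cases hband : r * i + s * j + t * k < 2 * t
  · exact hinit i j k hμ hband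
  obtain ⟨k, rfl⟩ : ∃ k', k = k' + 1 := ⟨k - 1, by ring⟩
  have hμ : 2 * t ≤ r * i + s * j + t * (k + 1) := by linarith
  have below : ∀ i' j' k', 0 ≤ r * i' + s * j' + t * k' →
      r * i' + s * j' + t * k' < r * i + s * j + t * (k + 1) → T i' j' k' = T' i' j' k' :=
    fun i' j' k' h₀ h₁ => ih (i', j', k') h₀ h₁
  exact octahedron_top_eq (hT i j k hμ) (hT' i j k hμ) (hT0 i j (k - 1) (by linarith))
    (below _ _ _ (by linarith) (by linarith)) (below _ _ _ (by linarith) (by linarith))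
    (below _ _ _ (by linarith) (by linarith)) (below _ _ _ (by linarith) (by linarith))
    (below _ _ _ (by linarith) (by linarith))

/-- The solution of the T-system is uniquely determined by its values on
the `2t` consecutive (r,s,t)-slanted initial-data planes `0 ≤ r·i+s·j+t·k < 2t`. -/
theorem Tsystem_unique_from_slanted_initial_data
    (r s t : ℤ) (hr0 : 0 ≤ r) (hrt : r < t) (hs0 : 0 ≤ s) (hst : s < t)
    (T T' : ℤ → ℤ → ℤ → ℝ)
    (hT0 : ∀ i j k : ℤ, 0 ≤ r * i + s * j + t * k → T i j k ≠ 0)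
    (hT'0 : ∀ i j k : ℤ, 0 ≤ r * i + s * j + t * k → T' i j k ≠ 0)
    (hT : ∀ i j k : ℤ, 2 * t ≤ r * i + s * j + t * (k + 1) →
      T i j (k + 1) * T i j (k - 1)
        = T (i + 1) j k * T (i - 1) j k + T i (j + 1) k * T i (j - 1) k)
    (hT' : ∀ i j k : ℤ, 2 * t ≤ r * i + s * j + t * (k + 1) →
      T' i j (k + 1) * T' i j (k - 1)
        = T' (i + 1) j k * T' (i - 1) j k + T' i (j + 1) k * T' i (j - 1) k)
    (hinit : ∀ i j k : ℤ, 0 ≤ r * i + s * j + t * k → r * i + s * j + t * k < 2 * t →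
      T i j k = T' i j k) :
    ∀ i j k : ℤ, 0 ≤ r * i + s * j + t * k → T i j k = T' i j k :=
  Tsystem_unique_from_slanted_initial_data_general r s t hr0 hrt hs0 hst T T' hT0 hT hT' hinit
end

section
/- Let T, T' : ℤ³ → ℝ be functions that are nonzero at every point with μ(i,j,k) ≥ 0 and that both satisfy the octahedron relation at every (i,j,k) ∈ ℤ³ with μ(i,j,k+1) ≥ 2t. Fix (i,j,k) ∈ ℤ³ with μ(i,j,k) ≥ 0. If T(x,y,z) = T'(x,y,z) for every point (x,y,z) of the initial-data band satisfying |x−i| + |y−j| ≤ k − z, then T(i,j,k) = T'(i,j,k); that is, the value of the T-system solution at (i,j,k) depends only on the initial data lying inside the cone |x−i| + |y−j| ≤ |z−k| with apex (i,j,k). -/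
/-!
Induct on `μ(i,j,k)`. On the band the value is initial data. Above it, the octahedron relation
centred at `(i,j,k-1)` expresses `T(i,j,k) · T(i,j,k-2)` through the four neighbours
`(i±1,j,k-1)`, `(i,j±1,k-1)`, all of which have smaller nonnegative `μ` because `0 ≤ r, s < t`.
These four points and `(i,j,k-2)` lie in the cone of `(i,j,k)`, so their cones lie in it too,
and cancelling the nonzero factor `T'(i,j,k-2)` gives `T(i,j,k) = T'(i,j,k)`.
-/

def OctahedronAt {R : Type*} [Semiring R] (T : ℤ → ℤ → ℤ → R) (i j k : ℤ) : Prop :=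
  T i j (k + 1) * T i j (k - 1)
    = T (i + 1) j k * T (i - 1) j k + T i (j + 1) k * T i (j - 1) k

theorem OctahedronAt.eq_of_eq_neighbours {R : Type*} [Semiring R] [IsRightCancelMulZero R]
    {T T' : ℤ → ℤ → ℤ → R} {i j k : ℤ}
    (hT : OctahedronAt T i j k) (hT' : OctahedronAt T' i j k)
    (hne : T' i j (k - 1) ≠ 0) (hbelow : T i j (k - 1) = T' i j (k - 1))
    (h₁ : T (i + 1) j k = T' (i + 1) j k) (h₂ : T (i - 1) j k = T' (i - 1) j k)
    (h₃ : T i (j + 1) k = T' i (j + 1) k) (h₄ : T i (j - 1) k = T' i (j - 1) k) :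
    T i j (k + 1) = T' i j (k + 1) :=
  mul_right_cancel₀ hne <| by rw [hT', ← hbelow, hT, h₁, h₂, h₃, h₄]

theorem abs_add_abs_le_of_mem_cone {i j k a b c x y z : ℤ} (hapex : |a - i| + |b - j| ≤ k - c)
    (hxyz : |x - a| + |y - b| ≤ c - z) : |x - i| + |y - j| ≤ k - z := by
  linarith [abs_sub_le x a i, abs_sub_le y b j]

theorem Tsystem_depends_only_on_cone_general
    (r s t : ℤ) (hr0 : 0 ≤ r) (hrt : r < t) (hs0 : 0 ≤ s) (hst : s < t)
    (T T' : ℤ → ℤ → ℤ → ℝ)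
    (hT'0 : ∀ i j k : ℤ, 0 ≤ r * i + s * j + t * k → T' i j k ≠ 0)
    (hT : ∀ i j k : ℤ, 2 * t ≤ r * i + s * j + t * (k + 1) →
      T i j (k + 1) * T i j (k - 1)
        = T (i + 1) j k * T (i - 1) j k + T i (j + 1) k * T i (j - 1) k)
    (hT' : ∀ i j k : ℤ, 2 * t ≤ r * i + s * j + t * (k + 1) →
      T' i j (k + 1) * T' i j (k - 1)
        = T' (i + 1) j k * T' (i - 1) j k + T' i (j + 1) k * T' i (j - 1) k)
    (i j k : ℤ) (hμ : 0 ≤ r * i + s * j + t * k)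
    (hinit : ∀ x y z : ℤ, 0 ≤ r * x + s * y + t * z → r * x + s * y + t * z < 2 * t →
      |x - i| + |y - j| ≤ k - z → T x y z = T' x y z) :
    T i j k = T' i j k := by
  suffices key : ∀ n : ℕ, ∀ i j k : ℤ,
      0 ≤ r * i + s * j + t * k → r * i + s * j + t * k < n →
      (∀ x y z : ℤ, 0 ≤ r * x + s * y + t * z → r * x + s * y + t * z < 2 * t →
        |x - i| + |y - j| ≤ k - z → T x y z = T' x y z) → T i j k = T' i j k from
    key ((r * i + s * j + t * k).toNat + 1) i j k hμ (by omega) hinit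
  intro n
  induction n with
  | zero => intro i j k h0 hlt; omega
  | succ n ih =>
    intro i j k h0 hlt hinit
    push_cast at hlt
    by_cases hband : r * i + s * j + t * k < 2 * t
    · exact hinit i j k h0 hband (by simp)
    have hcone : ∀ a b c : ℤ, |a - i| + |b - j| ≤ k - c → 0 ≤ r * a + s * b + t * c →
        r * a + s * b + t * c < n → T a b c = T' a b c := fun a b c hapex ha0 han =>
      ih a b c ha0 han fun x y z hx0 hxband hxyz =>
        hinit x y z hx0 hxband (abs_add_abs_le_of_mem_cone hapex hxyz)
    have hoct := OctahedronAt.eq_of_eq_neighbours (hT i j (k - 1) (by linarith))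
      (hT' i j (k - 1) (by linarith)) (hT'0 i j (k - 1 - 1) (by linarith))
      (hcone i j (k - 1 - 1) (by simp only [sub_self, abs_zero]; omega) (by linarith)
        (by linarith))
      (hcone (i + 1) j (k - 1) (by simp) (by linarith) (by linarith))
      (hcone (i - 1) j (k - 1) (by simp) (by linarith) (by linarith))
      (hcone i (j + 1) (k - 1) (by simp) (by linarith) (by linarith))
      (hcone i (j - 1) (k - 1) (by simp) (by linarith) (by linarith))
    rwa [sub_add_cancel] at hoct

/-- The value of the T-system solution at `(i,j,k)` depends only on the
initial data (on the band `0 ≤ r·x+s·y+t·z < 2t`) lying inside the cone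
`|x−i| + |y−j| ≤ k − z` with apex `(i,j,k)`. -/
theorem Tsystem_depends_only_on_cone
    (r s t : ℤ) (hr0 : 0 ≤ r) (hrt : r < t) (hs0 : 0 ≤ s) (hst : s < t)
    (T T' : ℤ → ℤ → ℤ → ℝ)
    (hT0 : ∀ i j k : ℤ, 0 ≤ r * i + s * j + t * k → T i j k ≠ 0)
    (hT'0 : ∀ i j k : ℤ, 0 ≤ r * i + s * j + t * k → T' i j k ≠ 0)
    (hT : ∀ i j k : ℤ, 2 * t ≤ r * i + s * j + t * (k + 1) →
      T i j (k + 1) * T i j (k - 1)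
        = T (i + 1) j k * T (i - 1) j k + T i (j + 1) k * T i (j - 1) k)
    (hT' : ∀ i j k : ℤ, 2 * t ≤ r * i + s * j + t * (k + 1) →
      T' i j (k + 1) * T' i j (k - 1)
        = T' (i + 1) j k * T' (i - 1) j k + T' i (j + 1) k * T' i (j - 1) k)
    (i j k : ℤ) (hμ : 0 ≤ r * i + s * j + t * k)
    (hinit : ∀ x y z : ℤ, 0 ≤ r * x + s * y + t * z → r * x + s * y + t * z < 2 * t →
      |x - i| + |y - j| ≤ k - z → T x y z = T' x y z) :
    T i j k = T' i j k :=
  Tsystem_depends_only_on_cone_general r s t hr0 hrt hs0 hst T T' hT'0 hT hT' i j k hμ hinit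
end

section
/- Let r,s,t be integers with 0 ≤ r ≤ s < t, and let i,j,k ∈ ℤ with i+j+k even. Then for all integers x and u: k − j + 1 − x + 2·⌊((t+s)·u + (r−s)·x)/(t−s)⌋ = 1 + (x−i) + 2·⌊(−(t+s)·((k+i+j)/2 − u) − (t−r)·(x−i) + r·i + s·j + t·k)/(t−s)⌋. (This identifies the horizontal-edge position function w(x,u) of the (r,s,t)-slanted dimer graph with the pinecone function L(ñ,R,C) of Bousquet-Mélou–Propp–West with parameters ĩ = t+s, j̃ = t−s, l̃ = t−r, m̃ = 2t, ñ = r·i + s·j + t·k + 2t, evaluated at R = x−i and C = (k+i+j)/2 − u.) -/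
/-!
With `i + j + k = 2m`, the pinecone numerator is the slanted-graph numerator `(t+s)u + (r-s)x`
plus the multiple `(t-s)(m-j-x)` of the denominator, so the two floors differ by `m - j - x`,
which is exactly what the linear parts `k - j + 1 - x` and `1 + (x - i)` need.
-/

theorem Int.floor_intCast_add_mul_div {K : Type*} [Field K] [LinearOrder K]
    [IsStrictOrderedRing K] [FloorRing K] (a d n : ℤ) (hd : d ≠ 0) :
    ⌊((a + d * n : ℤ) : K) / (d : K)⌋ = ⌊(a : K) / (d : K)⌋ + n := by
  have hdK : (d : K) ≠ 0 := Int.cast_ne_zero.mpr hd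
  rw [Int.cast_add, add_div, Int.cast_mul, mul_div_cancel_left₀ _ hdK, Int.floor_add_intCast]

theorem pinecone_numerator_eq (r s t i j k m x u : ℤ) (hm : i + j + k = m + m) :
    -(t + s) * (m - u) - (t - r) * (x - i) + r * i + s * j + t * k
      = ((t + s) * u + (r - s) * x) + (t - s) * (m - j - x) := by
  linear_combination t * hm

theorem w_equals_pinecone_L_general
    (r s t : ℤ) (hst : s < t)
    (i j k : ℤ) (hpar : Even (i + j + k)) :
    ∀ x u : ℤ,
      k - j + 1 - x
          + 2 * ⌊(((t + s) * u + (r - s) * x : ℤ) : ℚ) / ((t - s : ℤ) : ℚ)⌋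
        = 1 + (x - i)
          + 2 * ⌊((-(t + s) * ((k + i + j) / 2 - u) - (t - r) * (x - i)
              + r * i + s * j + t * k : ℤ) : ℚ) / ((t - s : ℤ) : ℚ)⌋ := by
  intro x u
  obtain ⟨m, hm⟩ := hpar
  have hhalf : (k + i + j) / 2 = m := by omega
  rw [hhalf, pinecone_numerator_eq r s t i j k m x u hm,
    Int.floor_intCast_add_mul_div _ _ _ (sub_ne_zero.mpr hst.ne')]
  omega

/-- Theorem 2.10, case `x ≥ i` identification: the horizontal-edge position
function `w(x,u)` of the (r,s,t)-slanted dimer graph coincides with the pinecone function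
`L(ñ,R,C)` of Bousquet-Mélou–Propp–West with `ĩ = t+s`, `j̃ = t−s`, `l̃ = t−r`, `m̃ = 2t`,
`ñ = r·i + s·j + t·k + 2t`, evaluated at `R = x−i`, `C = (k+i+j)/2 − u`. -/
theorem w_equals_pinecone_L
    (r s t : ℤ) (hr0 : 0 ≤ r) (hrs : r ≤ s) (hst : s < t)
    (i j k : ℤ) (hpar : Even (i + j + k)) :
    ∀ x u : ℤ,
      k - j + 1 - x
          + 2 * ⌊(((t + s) * u + (r - s) * x : ℤ) : ℚ) / ((t - s : ℤ) : ℚ)⌋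
        = 1 + (x - i)
          + 2 * ⌊((-(t + s) * ((k + i + j) / 2 - u) - (t - r) * (x - i)
              + r * i + s * j + t * k : ℤ) : ℚ) / ((t - s : ℤ) : ℚ)⌋ :=
  w_equals_pinecone_L_general r s t hst i j k hpar
end

section
/- Let r,s,t be nonnegative integers and α a positive real number with α^(t²) = α^(r²) + α^(s²). Define T : ℤ³ → ℝ by T(i,j,k) = α^(m(m−1)/2) where m = r·i + s·j + t·k (note m(m−1)/2 is always an integer). Then T satisfies the octahedron relation T(i,j,k+1)·T(i,j,k−1) = T(i+1,j,k)·T(i−1,j,k) + T(i,j+1,k)·T(i,j−1,k) at every (i,j,k) ∈ ℤ³; moreover, for every (i,j,k), T(i+1,j,k)·T(i−1,j,k)/(T(i,j,k+1)·T(i,j,k−1)) = α^(r²−t²) and T(i,j+1,k)·T(i,j−1,k)/(T(i,j,k+1)·T(i,j,k−1)) = α^(s²−t²). -/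
/-
With `m = r i + s j + t k`, the two neighbours of `(i,j,k)` in the direction whose coefficient
is `u ∈ {r, s, t}` have linear forms `m ± u`, and `C(m+u, 2) + C(m-u, 2) = 2 C(m, 2) + u²`.
So all three products in the octahedron relation equal `α^(2 C(m,2))` times `α^(r²)`, `α^(s²)`,
`α^(t²)` respectively, and the relation reduces to `α^(t²) = α^(r²) + α^(s²)`.
-/

/-- `C(m, 2)` for an integer `m`; the division is exact since `m (m - 1)` is even. -/
def choose2 (m : ℤ) : ℤ := m * (m - 1) / 2

lemma choose2_add_add_choose2_sub (m u : ℤ) :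
    choose2 (m + u) + choose2 (m - u) = 2 * choose2 m + u ^ 2 := by
  have hadd : 2 ∣ (m + u) * (m + u - 1) := (Int.even_mul_pred_self (m + u)).two_dvd
  have hsub : 2 ∣ (m - u) * (m - u - 1) := (Int.even_mul_pred_self (m - u)).two_dvd
  have hm : 2 ∣ m * (m - 1) := (Int.even_mul_pred_self m).two_dvd
  have hsum : (m + u) * (m + u - 1) + (m - u) * (m - u - 1) = 2 * (m * (m - 1)) + 2 * u ^ 2 := by
    ring
  unfold choose2
  omega

lemma zpow_choose2_add_mul_zpow_choose2_sub {G : Type*} [GroupWithZero G] {α : G} (hα : α ≠ 0)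
    (m u : ℤ) :
    α ^ choose2 (m + u) * α ^ choose2 (m - u) = α ^ (2 * choose2 m) * α ^ (u ^ 2) := by
  rw [← zpow_add₀ hα, ← zpow_add₀ hα, choose2_add_add_choose2_sub]

theorem uniform_solution_satisfies_Tsystem_general
    (r s t : ℤ)
    (α : ℝ) (hα : 0 < α)
    (hαeq : α ^ (t ^ 2) = α ^ (r ^ 2) + α ^ (s ^ 2))
    (T : ℤ → ℤ → ℤ → ℝ)
    (hT : ∀ i j k : ℤ,
      T i j k = α ^ ((r * i + s * j + t * k) * (r * i + s * j + t * k - 1) / 2)) :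
    ∀ i j k : ℤ,
      (T i j (k + 1) * T i j (k - 1)
        = T (i + 1) j k * T (i - 1) j k + T i (j + 1) k * T i (j - 1) k) ∧
      T (i + 1) j k * T (i - 1) j k / (T i j (k + 1) * T i j (k - 1)) = α ^ (r ^ 2 - t ^ 2) ∧
      T i (j + 1) k * T i (j - 1) k / (T i j (k + 1) * T i j (k - 1)) = α ^ (s ^ 2 - t ^ 2) := by
  intro i j k
  have hT : ∀ i j k : ℤ, T i j k = α ^ choose2 (r * i + s * j + t * k) := hT
  set m := r * i + s * j + t * k
  set c := α ^ (2 * choose2 m)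
  have hc : c ≠ 0 := zpow_ne_zero _ hα.ne'
  have shifted_product : ∀ a b u : ℤ, a = m + u → b = m - u →
      α ^ choose2 a * α ^ choose2 b = c * α ^ (u ^ 2) := by
    rintro a b u rfl rfl
    exact zpow_choose2_add_mul_zpow_choose2_sub hα.ne' m u
  have hk : T i j (k + 1) * T i j (k - 1) = c * α ^ (t ^ 2) := by
    rw [hT, hT]; exact shifted_product _ _ t (by ring) (by ring)
  have hi : T (i + 1) j k * T (i - 1) j k = c * α ^ (r ^ 2) := by
    rw [hT, hT]; exact shifted_product _ _ r (by ring) (by ring)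
  have hj : T i (j + 1) k * T i (j - 1) k = c * α ^ (s ^ 2) := by
    rw [hT, hT]; exact shifted_product _ _ s (by ring) (by ring)
  refine ⟨?_, ?_, ?_⟩
  · rw [hk, hi, hj, hαeq, mul_add]
  · rw [hi, hk, mul_div_mul_left _ _ hc, ← zpow_sub₀ hα.ne']
  · rw [hj, hk, mul_div_mul_left _ _ hc, ← zpow_sub₀ hα.ne']

/-- The uniform solution `T(i,j,k) = α^(m(m−1)/2)`, `m = r·i+s·j+t·k`,
with `α^(t²) = α^(r²) + α^(s²)`, satisfies the octahedron relation, and the coefficients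
`L` and `R` are the constants `α^(r²−t²)` and `α^(s²−t²)`. -/
theorem uniform_solution_satisfies_Tsystem
    (r s t : ℤ) (hr : 0 ≤ r) (hs : 0 ≤ s) (ht : 0 ≤ t)
    (α : ℝ) (hα : 0 < α)
    (hαeq : α ^ (t ^ 2) = α ^ (r ^ 2) + α ^ (s ^ 2))
    (T : ℤ → ℤ → ℤ → ℝ)
    (hT : ∀ i j k : ℤ,
      T i j k = α ^ ((r * i + s * j + t * k) * (r * i + s * j + t * k - 1) / 2)) :
    ∀ i j k : ℤ,
      (T i j (k + 1) * T i j (k - 1)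
        = T (i + 1) j k * T (i - 1) j k + T i (j + 1) k * T i (j - 1) k) ∧
      T (i + 1) j k * T (i - 1) j k / (T i j (k + 1) * T i j (k - 1)) = α ^ (r ^ 2 - t ^ 2) ∧
      T i (j + 1) k * T i (j - 1) k / (T i j (k + 1) * T i j (k - 1)) = α ^ (s ^ 2 - t ^ 2) :=
  uniform_solution_satisfies_Tsystem_general r s t α hα hαeq T hT
end

section
/- Let r,s,t be nonnegative integers with r < t and s < t. Then there exists a unique real number α > 0 such that α^(t²) = α^(r²) + α^(s²), and this α satisfies α > 1. -/
/-! Dividing by α^(t²) and substituting x = α⁻¹ turns the equation into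
x^(t² - r²) + x^(t² - s²) = 1. Both exponents are positive, so the left side increases strictly
from 0 to 2 on [0, 1] and is at least 2 for x ≥ 1: there is exactly one positive root, and it is
less than 1. -/

theorem pow_eq_pow_add_pow_iff_inv_pow_add_inv_pow_eq_one {K : Type*} [Field K] {α : K}
    (hα : α ≠ 0) {k m n : ℕ} (hm : m ≤ k) (hn : n ≤ k) :
    α ^ k = α ^ m + α ^ n ↔ α⁻¹ ^ (k - m) + α⁻¹ ^ (k - n) = 1 := by
  have hk : α ^ k ≠ 0 := pow_ne_zero k hα
  have inv_pow_sub (j : ℕ) (hj : j ≤ k) : α⁻¹ ^ (k - j) = α ^ j / α ^ k := by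
    rw [inv_pow, pow_sub₀ α hα hj, mul_inv, inv_inv, div_eq_mul_inv, mul_comm]
  rw [inv_pow_sub m hm, inv_pow_sub n hn, ← add_div, div_eq_one_iff_eq hk, eq_comm]

theorem strictMonoOn_pow_add_pow {a b : ℕ} (ha : a ≠ 0) (hb : b ≠ 0) :
    StrictMonoOn (fun x : ℝ => x ^ a + x ^ b) (Set.Ici 0) := fun _ hx _ _ hxy =>
  add_lt_add (pow_lt_pow_left₀ hxy hx ha) (pow_lt_pow_left₀ hxy hx hb)

theorem lt_one_of_pow_add_pow_eq_one {x : ℝ} {a b : ℕ} (h : x ^ a + x ^ b = 1) : x < 1 := by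
  by_contra! hx
  linarith [one_le_pow₀ (n := a) hx, one_le_pow₀ (n := b) hx]

theorem exists_unique_pos_pow_add_pow_eq_one {a b : ℕ} (ha : a ≠ 0) (hb : b ≠ 0) :
    ∃! x : ℝ, 0 < x ∧ x ^ a + x ^ b = 1 := by
  have hcont : ContinuousOn (fun x : ℝ => x ^ a + x ^ b) (Set.Icc 0 1) := by fun_prop
  obtain ⟨x, ⟨hx0, -⟩, hx⟩ := intermediate_value_Ioo zero_le_one hcont
    (show (1 : ℝ) ∈ Set.Ioo (0 ^ a + 0 ^ b) (1 ^ a + 1 ^ b) by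
      simp only [zero_pow ha, zero_pow hb, one_pow]; norm_num)
  exact ⟨x, ⟨hx0, hx⟩, fun y ⟨hy0, hy⟩ =>
    (strictMonoOn_pow_add_pow ha hb).injOn hy0.le hx0.le (hy.trans hx.symm)⟩

/-- For `0 ≤ r < t`, `0 ≤ s < t` there is a unique `α > 0` with
`α^(t²) = α^(r²) + α^(s²)`, and it satisfies `α > 1`. -/
theorem exists_unique_alpha (r s t : ℕ) (hrt : r < t) (hst : s < t) :
    (∃! α : ℝ, 0 < α ∧ α ^ (t ^ 2) = α ^ (r ^ 2) + α ^ (s ^ 2)) ∧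
    (∀ α : ℝ, 0 < α → α ^ (t ^ 2) = α ^ (r ^ 2) + α ^ (s ^ 2) → 1 < α) := by
  have hr : r ^ 2 < t ^ 2 := Nat.pow_lt_pow_left hrt two_ne_zero
  have hs : s ^ 2 < t ^ 2 := Nat.pow_lt_pow_left hst two_ne_zero
  have key (α : ℝ) (hα : 0 < α) :=
    pow_eq_pow_add_pow_iff_inv_pow_add_inv_pow_eq_one hα.ne' hr.le hs.le
  obtain ⟨x, ⟨hx0, hx⟩, huniq⟩ :=
    exists_unique_pos_pow_add_pow_eq_one (Nat.sub_ne_zero_of_lt hr) (Nat.sub_ne_zero_of_lt hs)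
  refine ⟨⟨x⁻¹, ⟨inv_pos.2 hx0, (key _ (inv_pos.2 hx0)).2 (by rwa [inv_inv])⟩, ?_⟩, ?_⟩
  · rintro β ⟨hβ, h⟩
    exact inv_eq_iff_eq_inv.1 (huniq β⁻¹ ⟨inv_pos.2 hβ, (key β hβ).1 h⟩)
  · intro α hα h
    exact (inv_lt_one₀ hα).1 (lt_one_of_pow_add_pow_eq_one ((key α hα).1 h))
end

section
/- Fix integers r,s,t with 0 ≤ r < t and 0 ≤ s < t, set μ(i,j,k) = r·i + s·j + t·k, and let A, B be real numbers with A + B = 1 (in the uniform model A = α^(r²−t²) and B = α^(s²−t²)). Fix (i₀,j₀,k₀) ∈ ℤ³ with p := μ(i₀,j₀,k₀) satisfying 0 ≤ p < 2t. Suppose ρ : ℤ³ → ℝ satisfies: (a) ρ(i,j,k) = 0 whenever μ(i,j,k) < 0; (b) for every (i,j,k) with 0 ≤ μ(i,j,k) < 2t, ρ(i,j,k) = 1 if (i,j,k) = (i₀,j₀,k₀) and ρ(i,j,k) = 0 otherwise; (c) for every (i,j,k) with μ(i,j,k) ≥ 2t, ρ(i,j,k) + ρ(i,j,k−2) = A·(ρ(i+1,j,k−1)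 + ρ(i−1,j,k−1)) + B·(ρ(i,j+1,k−1) + ρ(i,j−1,k−1)). Then for every (i,j,k) ∈ ℤ³ the quantity E(i,j,k) := ρ(i,j,k) + ρ(i,j,k−2) − A·(ρ(i+1,j,k−1) + ρ(i−1,j,k−1)) − B·(ρ(i,j+1,k−1) + ρ(i,j−1,k−1)) equals: 1 if (i,j,k) = (i₀,j₀,k₀); −A if (i,j,k) = (i₀−1,j₀,k₀+1) and p < t+r, or if (i,j,k) = (i₀+1,j₀,k₀+1) and p < t−r; −B if (i,j,k) = (i₀,j₀−1,k₀+1) and p < t+s, or if (i,j,k) = (i₀,j₀+1,k₀+1) and p < t−s; and 0 otherwise. (This is the coefficient-wise form of the generating-function identity ρ_p(x,y,z)·D(x,y,z) = numerator of Theorem 3.2, covering all five cases of p at once.) -/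
/-!
Below the plane `μ = 2t` the density is the point mass at the source. Since `|r|, |s| < t`, every
other term of the defect at a point lies on a strictly lower plane, so at points below `2t`
the defect of `ρ` is the defect of the point mass, which is computed directly. On and above
`μ = 2t` the defect vanishes by the recursion, and so does the numerator, which is supported
below `2t`.
-/

def pointMass (i₀ j₀ k₀ i j k : ℤ) : ℝ :=
  if (i, j, k) = (i₀, j₀, k₀) then 1 else 0

-- The coefficients of `f · D`, `D` the denominator of the generating function (Theorem 3.2).
def defect (A B : ℝ) (f : ℤ → ℤ → ℤ → ℝ) (i j k : ℤ) : ℝ :=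
  f i j k + f i j (k - 2)
    - A * (f (i + 1) j (k - 1) + f (i - 1) j (k - 1))
    - B * (f i (j + 1) (k - 1) + f i (j - 1) (k - 1))

-- The coefficients of the numerator in Theorem 3.2, for all five ranges of `μ(i₀, j₀, k₀)`.
def numeratorCoeff (r s t : ℤ) (A B : ℝ) (i₀ j₀ k₀ i j k : ℤ) : ℝ :=
  if (i, j, k) = (i₀, j₀, k₀) then 1
  else if ((i, j, k) = (i₀ - 1, j₀, k₀ + 1) ∧ r * i₀ + s * j₀ + t * k₀ < t + r)
      ∨ ((i, j, k) = (i₀ + 1, j₀, k₀ + 1) ∧ r * i₀ + s * j₀ + t * k₀ < t - r)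
    then -A
  else if ((i, j, k) = (i₀, j₀ - 1, k₀ + 1) ∧ r * i₀ + s * j₀ + t * k₀ < t + s)
      ∨ ((i, j, k) = (i₀, j₀ + 1, k₀ + 1) ∧ r * i₀ + s * j₀ + t * k₀ < t - s)
    then -B
  else 0

section

variable {r s t : ℤ} {A B : ℝ} {i₀ j₀ k₀ i j k : ℤ}

theorem eq_pointMass_of_lt {ρ : ℤ → ℤ → ℤ → ℝ} (hp : 0 ≤ r * i₀ + s * j₀ + t * k₀)
    (hneg : ∀ i j k : ℤ, r * i + s * j + t * k < 0 → ρ i j k = 0)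
    (hband : ∀ i j k : ℤ, 0 ≤ r * i + s * j + t * k → r * i + s * j + t * k < 2 * t →
      ρ i j k = pointMass i₀ j₀ k₀ i j k)
    (h : r * i + s * j + t * k < 2 * t) :
    ρ i j k = pointMass i₀ j₀ k₀ i j k := by
  rcases lt_or_ge (r * i + s * j + t * k) 0 with hlt | hle
  · rw [hneg i j k hlt, pointMass, if_neg]
    rintro ⟨⟩
    linarith
  · exact hband i j k hle h

theorem defect_congr {c : ℤ} (hr : |r| < t) (hs : |s| < t) {f g : ℤ → ℤ → ℤ → ℝ}
    (hfg : ∀ a b d : ℤ, r * a + s * b + t * d < c → f a b d = g a b d)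
    (h : r * i + s * j + t * k < c) :
    defect A B f i j k = defect A B g i j k := by
  obtain ⟨hr₁, hr₂⟩ := abs_lt.mp hr
  obtain ⟨hs₁, hs₂⟩ := abs_lt.mp hs
  simp only [defect]
  rw [hfg i j k h, hfg i j (k - 2) (by linarith), hfg (i + 1) j (k - 1) (by linarith),
    hfg (i - 1) j (k - 1) (by linarith), hfg i (j + 1) (k - 1) (by linarith),
    hfg i (j - 1) (k - 1) (by linarith)]

theorem numeratorCoeff_eq_zero (hp : r * i₀ + s * j₀ + t * k₀ < 2 * t)
    (h : 2 * t ≤ r * i + s * j + t * k) :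
    numeratorCoeff r s t A B i₀ j₀ k₀ i j k = 0 := by
  rw [numeratorCoeff, if_neg, if_neg, if_neg]
  all_goals first
    | rintro ⟨⟩; linarith
    | rintro (⟨⟨⟩, _⟩ | ⟨⟨⟩, _⟩) <;> linarith

theorem defect_pointMass (hp : 0 ≤ r * i₀ + s * j₀ + t * k₀)
    (h : r * i + s * j + t * k < 2 * t) :
    defect A B (pointMass i₀ j₀ k₀) i j k = numeratorCoeff r s t A B i₀ j₀ k₀ i j k := by
  -- Below `2t` each side condition on `μ(i₀, j₀, k₀)` just says that its point lies below `2t`.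
  have hA₁ : i = i₀ - 1 ∧ j = j₀ ∧ k = k₀ + 1 → r * i₀ + s * j₀ + t * k₀ < t + r := by
    rintro ⟨rfl, rfl, rfl⟩; linarith
  have hA₂ : i = i₀ + 1 ∧ j = j₀ ∧ k = k₀ + 1 → r * i₀ + s * j₀ + t * k₀ < t - r := by
    rintro ⟨rfl, rfl, rfl⟩; linarith
  have hB₁ : i = i₀ ∧ j = j₀ - 1 ∧ k = k₀ + 1 → r * i₀ + s * j₀ + t * k₀ < t + s := by
    rintro ⟨rfl, rfl, rfl⟩; linarith
  have hB₂ : i = i₀ ∧ j = j₀ + 1 ∧ k = k₀ + 1 → r * i₀ + s * j₀ + t * k₀ < t - s := by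
    rintro ⟨rfl, rfl, rfl⟩; linarith
  have hbelow : ¬(i = i₀ ∧ j = j₀ ∧ k - 2 = k₀) := by
    rintro ⟨rfl, rfl, hk⟩
    obtain rfl : k = k₀ + 2 := by omega
    linarith
  simp only [defect, numeratorCoeff, pointMass, Prod.mk.injEq, and_iff_left_of_imp hA₁,
    and_iff_left_of_imp hA₂, and_iff_left_of_imp hB₁, and_iff_left_of_imp hB₂, if_neg hbelow]
  split_ifs <;> first | omega | ring

end

theorem uniform_density_generating_identity_general
    (r s t : ℤ) (hr0 : 0 ≤ r) (hrt : r < t) (hs0 : 0 ≤ s) (hst : s < t)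
    (A B : ℝ)
    (i₀ j₀ k₀ : ℤ) (hp0 : 0 ≤ r * i₀ + s * j₀ + t * k₀)
    (hp2t : r * i₀ + s * j₀ + t * k₀ < 2 * t)
    (ρ : ℤ → ℤ → ℤ → ℝ)
    (hneg : ∀ i j k : ℤ, r * i + s * j + t * k < 0 → ρ i j k = 0)
    (hband : ∀ i j k : ℤ, 0 ≤ r * i + s * j + t * k → r * i + s * j + t * k < 2 * t →
      ρ i j k = if (i, j, k) = (i₀, j₀, k₀) then 1 else 0)
    (hrec : ∀ i j k : ℤ, 2 * t ≤ r * i + s * j + t * k →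
      ρ i j k + ρ i j (k - 2)
        = A * (ρ (i + 1) j (k - 1) + ρ (i - 1) j (k - 1))
          + B * (ρ i (j + 1) (k - 1) + ρ i (j - 1) (k - 1))) :
    ∀ i j k : ℤ,
      ρ i j k + ρ i j (k - 2)
          - A * (ρ (i + 1) j (k - 1) + ρ (i - 1) j (k - 1))
          - B * (ρ i (j + 1) (k - 1) + ρ i (j - 1) (k - 1))
        = if (i, j, k) = (i₀, j₀, k₀) then 1
          else if ((i, j, k) = (i₀ - 1, j₀, k₀ + 1) ∧ r * i₀ + s * j₀ + t * k₀ < t + r)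
              ∨ ((i, j, k) = (i₀ + 1, j₀, k₀ + 1) ∧ r * i₀ + s * j₀ + t * k₀ < t - r)
            then -A
          else if ((i, j, k) = (i₀, j₀ - 1, k₀ + 1) ∧ r * i₀ + s * j₀ + t * k₀ < t + s)
              ∨ ((i, j, k) = (i₀, j₀ + 1, k₀ + 1) ∧ r * i₀ + s * j₀ + t * k₀ < t - s)
            then -B
          else 0 := by
  intro i j k
  change defect A B ρ i j k = numeratorCoeff r s t A B i₀ j₀ k₀ i j k
  rcases le_or_gt (2 * t) (r * i + s * j + t * k) with hup | hlow
  · rw [numeratorCoeff_eq_zero hp2t hup, defect, hrec i j k hup]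
    ring
  · have hr : |r| < t := abs_lt.mpr ⟨by linarith, hrt⟩
    have hs : |s| < t := abs_lt.mpr ⟨by linarith, hst⟩
    rw [defect_congr hr hs (fun a b c h => eq_pointMass_of_lt hp0 hneg hband h) hlow]
    exact defect_pointMass hp0 hlow

/-- coefficient-wise form of Theorem 3.2: the local dimer density ρ of
the uniform (r,s,t)-slanted T-system, with source `(i₀,j₀,k₀)` on plane `p = μ(i₀,j₀,k₀)`,
satisfies `ρ_p·D = numerator`, i.e. the defect
`E(i,j,k) = ρ(i,j,k) + ρ(i,j,k−2) − A(ρ(i±1,j,k−1)) − B(ρ(i,j±1,k−1))`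
takes the stated values. -/
theorem uniform_density_generating_identity
    (r s t : ℤ) (hr0 : 0 ≤ r) (hrt : r < t) (hs0 : 0 ≤ s) (hst : s < t)
    (A B : ℝ) (hAB : A + B = 1)
    (i₀ j₀ k₀ : ℤ) (hp0 : 0 ≤ r * i₀ + s * j₀ + t * k₀)
    (hp2t : r * i₀ + s * j₀ + t * k₀ < 2 * t)
    (ρ : ℤ → ℤ → ℤ → ℝ)
    (hneg : ∀ i j k : ℤ, r * i + s * j + t * k < 0 → ρ i j k = 0)
    (hband : ∀ i j k : ℤ, 0 ≤ r * i + s * j + t * k → r * i + s * j + t * k < 2 * t →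
      ρ i j k = if (i, j, k) = (i₀, j₀, k₀) then 1 else 0)
    (hrec : ∀ i j k : ℤ, 2 * t ≤ r * i + s * j + t * k →
      ρ i j k + ρ i j (k - 2)
        = A * (ρ (i + 1) j (k - 1) + ρ (i - 1) j (k - 1))
          + B * (ρ i (j + 1) (k - 1) + ρ i (j - 1) (k - 1))) :
    ∀ i j k : ℤ,
      ρ i j k + ρ i j (k - 2)
          - A * (ρ (i + 1) j (k - 1) + ρ (i - 1) j (k - 1))
          - B * (ρ i (j + 1) (k - 1) + ρ i (j - 1) (k - 1))
        = if (i, j, k) = (i₀, j₀, k₀) then 1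
          else if ((i, j, k) = (i₀ - 1, j₀, k₀ + 1) ∧ r * i₀ + s * j₀ + t * k₀ < t + r)
              ∨ ((i, j, k) = (i₀ + 1, j₀, k₀ + 1) ∧ r * i₀ + s * j₀ + t * k₀ < t - r)
            then -A
          else if ((i, j, k) = (i₀, j₀ - 1, k₀ + 1) ∧ r * i₀ + s * j₀ + t * k₀ < t + s)
              ∨ ((i, j, k) = (i₀, j₀ + 1, k₀ + 1) ∧ r * i₀ + s * j₀ + t * k₀ < t - s)
            then -B
          else 0 :=
  uniform_density_generating_identity_general r s t hr0 hrt hs0 hst A B i₀ j₀ k₀ hp0 hp2t ρ hneg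
    hband hrec
end

section
/- Let r,s,t be integers with 0 ≤ r < t and 0 ≤ s < t, and let A be a real number with 0 < A < 1. Then t² − A·r² > 0 and t² − (1−A)·s² > 0, the quadratic form Q(u,v) = (1−A)·t²·u² + A·t²·v² − A·(1−A)·(r·u + s·v)² is positive definite on ℝ², and the arctic curve {(u,v) ∈ ℝ² : (1−A)·t²·u² + A·t²·v² − A·(1−A)·(r·u + s·v + t)² = 0} is a nonempty bounded subset of ℝ² (an ellipse). -/
set_option maxHeartbeats 3200000

/-- for `0 ≤ r < t`, `0 ≤ s < t` and `0 < A < 1`, one has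
`t² − A·r² > 0`, `t² − (1−A)·s² > 0`, the quadratic form
`Q(u,v) = (1−A)t²u² + At²v² − A(1−A)(ru+sv)²` is positive definite, and the arctic curve
`(1−A)t²u² + At²v² − A(1−A)(ru+sv+t)² = 0` is a nonempty bounded subset of ℝ²
(an ellipse). -/
theorem arctic_curve_is_ellipse
    (r s t : ℤ) (hr0 : 0 ≤ r) (hrt : r < t) (hs0 : 0 ≤ s) (hst : s < t)
    (A : ℝ) (hA0 : 0 < A) (hA1 : A < 1) :
    (0 < (t : ℝ) ^ 2 - A * (r : ℝ) ^ 2) ∧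
    (0 < (t : ℝ) ^ 2 - (1 - A) * (s : ℝ) ^ 2) ∧
    (∀ u v : ℝ, (u, v) ≠ (0, 0) →
      0 < (1 - A) * (t : ℝ) ^ 2 * u ^ 2 + A * (t : ℝ) ^ 2 * v ^ 2
          - A * (1 - A) * ((r : ℝ) * u + (s : ℝ) * v) ^ 2) ∧
    ({p : ℝ × ℝ |
        (1 - A) * (t : ℝ) ^ 2 * p.1 ^ 2 + A * (t : ℝ) ^ 2 * p.2 ^ 2
          - A * (1 - A) * ((r : ℝ) * p.1 + (s : ℝ) * p.2 + (t : ℝ)) ^ 2 = 0}.Nonempty ∧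
      Bornology.IsBounded
        {p : ℝ × ℝ |
          (1 - A) * (t : ℝ) ^ 2 * p.1 ^ 2 + A * (t : ℝ) ^ 2 * p.2 ^ 2
            - A * (1 - A) * ((r : ℝ) * p.1 + (s : ℝ) * p.2 + (t : ℝ)) ^ 2 = 0}) := by
  have hr' : (0:ℝ) ≤ (r:ℝ) := by exact_mod_cast hr0
  have hs' : (0:ℝ) ≤ (s:ℝ) := by exact_mod_cast hs0
  have hrt' : (r:ℝ) < (t:ℝ) := by exact_mod_cast hrt
  have hst' : (s:ℝ) < (t:ℝ) := by exact_mod_cast hst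
  have ht' : (0:ℝ) < (t:ℝ) := lt_of_le_of_lt hr' hrt'
  have hr2 : (r:ℝ)^2 < (t:ℝ)^2 := by
    have := mul_self_lt_mul_self hr' hrt'
    nlinarith
  have hs2 : (s:ℝ)^2 < (t:ℝ)^2 := by
    have := mul_self_lt_mul_self hs' hst'
    nlinarith
  have hA1' : 0 < 1 - A := by linarith
  have part1 : 0 < (t : ℝ) ^ 2 - A * (r : ℝ) ^ 2 := by
    have h1 := mul_le_mul_of_nonneg_left hr2.le hA0.le
    have h2 : A * (t:ℝ)^2 < 1 * (t:ℝ)^2 := mul_lt_mul_of_pos_right hA1 (by positivity)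
    linarith
  have part2 : 0 < (t : ℝ) ^ 2 - (1 - A) * (s : ℝ) ^ 2 := by
    have h1 := mul_le_mul_of_nonneg_left hs2.le hA1'.le
    have h2 : (1 - A) * (t:ℝ)^2 < 1 * (t:ℝ)^2 := mul_lt_mul_of_pos_right (by linarith) (by positivity)
    linarith
  -- abbreviations
  set a : ℝ := (1-A)*(t:ℝ)^2 - A*(1-A)*(r:ℝ)^2 with hadef
  set b : ℝ := -(A*(1-A)*(r:ℝ)*(s:ℝ)) with hbdef
  set c : ℝ := A*(t:ℝ)^2 - A*(1-A)*(s:ℝ)^2 with hcdef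
  set D : ℝ := A*(1-A)*(t:ℝ)^2*((t:ℝ)^2 - A*(r:ℝ)^2 - (1-A)*(s:ℝ)^2) with hDdef
  have hE : 0 < (t:ℝ)^2 - A*(r:ℝ)^2 - (1-A)*(s:ℝ)^2 := by
    have h1 := mul_pos hA0 (sub_pos.2 hr2)
    have h2 := mul_pos hA1' (sub_pos.2 hs2)
    nlinarith
  have hD : 0 < D := by
    rw [hDdef]; exact mul_pos (mul_pos (mul_pos hA0 hA1') (by positivity)) hE
  have ha : 0 < a := by rw [hadef]; nlinarith [mul_pos hA1' part1]
  have hc : 0 < c := by rw [hcdef]; nlinarith [mul_pos hA0 part2]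
  have key : ∀ u v : ℝ,
      (a+c) * ((1 - A) * (t : ℝ) ^ 2 * u ^ 2 + A * (t : ℝ) ^ 2 * v ^ 2
          - A * (1 - A) * ((r : ℝ) * u + (s : ℝ) * v) ^ 2)
      = (a*u+b*v)^2 + (b*u+c*v)^2 + D*(u^2+v^2) := by
    intro u v
    simp only [hadef, hbdef, hcdef, hDdef]; ring
  refine ⟨part1, part2, ?_, ?_, ?_⟩
  · -- positive definiteness
    intro u v h
    have huv : 0 < u^2 + v^2 := by
      have h0 : ¬(u = 0 ∧ v = 0) := by simpa [Prod.ext_iff] using h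
      rcases not_and_or.mp h0 with h' | h'
      · positivity
      · positivity
    have hac : 0 < a + c := by linarith
    have h5 : 0 < (a+c) * ((1 - A) * (t : ℝ) ^ 2 * u ^ 2 + A * (t : ℝ) ^ 2 * v ^ 2
          - A * (1 - A) * ((r : ℝ) * u + (s : ℝ) * v) ^ 2) := by
      linarith [key u v, sq_nonneg (a*u+b*v), sq_nonneg (b*u+c*v), mul_pos hD huv]
    rcases mul_pos_iff.mp h5 with ⟨_, h6⟩ | ⟨h6, _⟩
    · exact h6
    · linarith
  · -- nonempty
    set B : ℝ := Real.sqrt A with hBdef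
    have hB2 : B^2 = A := Real.sq_sqrt hA0.le
    have hB0 : 0 < B := Real.sqrt_pos.2 hA0
    have hB1 : B < 1 := by nlinarith
    have hd : 0 < (t:ℝ) - B*(r:ℝ) := by nlinarith [mul_le_of_le_one_left hr' hB1.le]
    set u₀ : ℝ := B*(t:ℝ)/((t:ℝ) - B*(r:ℝ)) with hu0def
    have h1 : (t:ℝ)*u₀ = B*((r:ℝ)*u₀+(t:ℝ)) := by
      rw [hu0def]; field_simp; ring
    refine ⟨(u₀, 0), ?_⟩
    simp only [Set.mem_setOf_eq]
    have h2 : (t:ℝ)^2*u₀^2 = A*((r:ℝ)*u₀+(t:ℝ))^2 := by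
      linear_combination ((t:ℝ)*u₀ + B*((r:ℝ)*u₀+(t:ℝ))) * h1 + ((r:ℝ)*u₀+(t:ℝ))^2 * hB2
    linear_combination (1-A) * h2
  · -- bounded
    set K : ℝ := (a+c)*A*(1-A) with hKdef
    set α : ℝ := 2*K*(t:ℝ)*(r:ℝ) with hαdef
    set β : ℝ := 2*K*(t:ℝ)*(s:ℝ) with hβdef
    set γ : ℝ := K*(t:ℝ)^2 with hγdef
    have hK : 0 < K := by
      rw [hKdef]; exact mul_pos (mul_pos (by linarith) hA0) hA1'
    have hγ : 0 < γ := by rw [hγdef]; positivity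
    have hα : 0 ≤ α := by rw [hαdef]; positivity
    have hβ : 0 ≤ β := by rw [hβdef]; positivity
    set M : ℝ := (4*(α^2+β^2) + 4*D*γ)/(3*D^2) with hMdef
    have hM0 : 0 ≤ M := by rw [hMdef]; positivity
    have key2 : ∀ u v : ℝ,
        (a+c) * ((1 - A) * (t : ℝ) ^ 2 * u ^ 2 + A * (t : ℝ) ^ 2 * v ^ 2
            - A * (1 - A) * ((r : ℝ) * u + (s : ℝ) * v + (t:ℝ)) ^ 2)
        = (a*u+b*v)^2 + (b*u+c*v)^2 + D*(u^2+v^2) - (α*u + β*v + γ) := by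
      intro u v
      simp only [hadef, hbdef, hcdef, hDdef, hαdef, hβdef, hγdef, hKdef]; ring
    apply Bornology.IsBounded.subset (Metric.isBounded_closedBall (x := (0:ℝ×ℝ)) (r := M + 1))
    rintro ⟨u, v⟩ hp
    simp only [Set.mem_setOf_eq] at hp
    have e := key2 u v
    rw [hp, mul_zero] at e
    have h1 : D*(u^2+v^2) ≤ α*u + β*v + γ := by
      linarith [sq_nonneg (a*u+b*v), sq_nonneg (b*u+c*v)]
    have h2 : 3*D^2*(u^2+v^2) ≤ 4*(α^2+β^2) + 4*D*γ := by
      linarith [sq_nonneg (D*u - 2*α), sq_nonneg (D*v - 2*β),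
        mul_le_mul_of_nonneg_left h1 (by linarith : (0:ℝ) ≤ 4*D)]
    have h3 : u^2 + v^2 ≤ M := by
      rw [hMdef, le_div_iff₀ (by positivity)]
      linarith
    have hu2 : u^2 ≤ M := by linarith [sq_nonneg v]
    have hv2 : v^2 ≤ M := by linarith [sq_nonneg u]
    simp only [Metric.mem_closedBall, dist_zero_right, Prod.norm_def, Real.norm_eq_abs]
    have habs : ∀ w : ℝ, w^2 ≤ M → |w| ≤ M + 1 := by
      intro w hw
      rw [← Real.sqrt_sq_eq_abs]
      calc Real.sqrt (w^2) ≤ Real.sqrt ((M+1)^2) :=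
            Real.sqrt_le_sqrt (by nlinarith [sq_nonneg M])
        _ = M + 1 := Real.sqrt_sq (by linarith)
    exact max_le (habs u hu2) (habs v hv2)
end

section
/- Let T : ℤ³ → ℝ be nonzero at every point with μ(i,j,k) ≥ 0 and satisfy the octahedron relation at every (i,j,k) with μ(i,j,k+1) ≥ 2t. Assume that for every (i,j,k) in the initial-data band one has T(i+2, j−2, k) = T(i,j,k) and T(i+2t, j, k−2r) = T(i,j,k) (note that these translations preserve μ, hence preserve the band). Then for all (i,j,k) with μ(i,j,k) ≥ 0: T(i+2, j−2, k) = T(i,j,k), and T(i+2t, j, k) = T(i, j, k+2r). -/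
/-!
Both claims are instances of one uniqueness principle: a solution of the octahedron relation
that does not vanish on `μ ≥ 0` is determined there by its values on the band, since the
relation centred one step below a point `p` with `μ p ≥ 2t` expresses `T p` through values at
strictly smaller height `μ p - t ± r ≥ 0` and `μ p - 2t ≥ 0`, divided by a nonzero one.
Translations by vectors in the kernel of `μ` map solutions to solutions, so `T` and a translate
of `T` that agree on the band agree everywhere above it.
-/

namespace SlantedTSystem

/-- The height `μ` of the paper, with `s = r`. -/
def slantHeight (r t i j k : ℤ) : ℤ := r * i + r * j + t * k

def Octahedron (T : ℤ → ℤ → ℤ → ℝ) (i j k : ℤ) : Prop :=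
  T i j (k + 1) * T i j (k - 1) = T (i + 1) j k * T (i - 1) j k + T i (j + 1) k * T i (j - 1) k

theorem Octahedron.translate {T : ℤ → ℤ → ℤ → ℝ} {a b c i j k : ℤ}
    (h : Octahedron T (i + a) (j + b) (k + c)) :
    Octahedron (fun i j k => T (i + a) (j + b) (k + c)) i j k := by
  unfold Octahedron at h ⊢
  convert h using 3 <;> ring_nf

theorem Octahedron.top_eq {S T : ℤ → ℤ → ℤ → ℝ} {i j k : ℤ}
    (hS : Octahedron S i j k) (hT : Octahedron T i j k) (hbot : T i j (k - 1) ≠ 0)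
    (h₁ : S (i + 1) j k = T (i + 1) j k) (h₂ : S (i - 1) j k = T (i - 1) j k)
    (h₃ : S i (j + 1) k = T i (j + 1) k) (h₄ : S i (j - 1) k = T i (j - 1) k)
    (h₅ : S i j (k - 1) = T i j (k - 1)) :
    S i j (k + 1) = T i j (k + 1) := by
  apply mul_right_cancel₀ hbot
  unfold Octahedron at hS hT
  rw [← h₅, hS, h₁, h₂, h₃, h₄, h₅, hT]

section Uniqueness

variable {r t : ℤ} {S T : ℤ → ℤ → ℤ → ℝ}

theorem eq_of_eqOn_band (hrt : |r| < t)
    (hT0 : ∀ i j k, 0 ≤ slantHeight r t i j k → T i j k ≠ 0)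
    (hS : ∀ i j k, 2 * t ≤ slantHeight r t i j (k + 1) → Octahedron S i j k)
    (hT : ∀ i j k, 2 * t ≤ slantHeight r t i j (k + 1) → Octahedron T i j k)
    (hband : ∀ i j k, 0 ≤ slantHeight r t i j k → slantHeight r t i j k < 2 * t →
      S i j k = T i j k) :
    ∀ i j k, 0 ≤ slantHeight r t i j k → S i j k = T i j k := by
  obtain ⟨hrt₁, hrt₂⟩ := abs_lt.mp hrt
  suffices h : ∀ n : ℕ, ∀ i j k, 0 ≤ slantHeight r t i j k → slantHeight r t i j k < n →
      S i j k = T i j k from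
    fun i j k hμ => h (slantHeight r t i j k).toNat.succ i j k hμ (by omega)
  intro n
  induction n with
  | zero => intro i j k h0 hn; omega
  | succ n ih =>
    intro i j k h0 hn
    by_cases hlow : slantHeight r t i j k < 2 * t
    · exact hband i j k h0 hlow
    obtain ⟨k, rfl⟩ : ∃ k', k = k' + 1 := ⟨k - 1, by ring⟩
    simp only [slantHeight] at ih hT0 h0 hn hlow
    push_cast at hn
    refine (hS i j k (not_lt.mp hlow)).top_eq (hT i j k (not_lt.mp hlow))
      (hT0 i j (k - 1) (by linarith)) ?_ ?_ ?_ ?_ ?_ <;>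
      exact ih _ _ _ (by linarith) (by linarith)

theorem translate_eq_of_eqOn_band (hrt : |r| < t)
    (hT0 : ∀ i j k, 0 ≤ slantHeight r t i j k → T i j k ≠ 0)
    (hT : ∀ i j k, 2 * t ≤ slantHeight r t i j (k + 1) → Octahedron T i j k)
    {a b c : ℤ} (habc : r * a + r * b + t * c = 0)
    (hband : ∀ i j k, 0 ≤ slantHeight r t i j k → slantHeight r t i j k < 2 * t →
      T (i + a) (j + b) (k + c) = T i j k) :
    ∀ i j k, 0 ≤ slantHeight r t i j k → T (i + a) (j + b) (k + c) = T i j k :=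
  eq_of_eqOn_band hrt hT0
    (fun i j k hμ => (hT _ _ _ (by simp only [slantHeight] at hμ ⊢; linarith)).translate)
    hT hband

end Uniqueness

end SlantedTSystem

open SlantedTSystem in
/-- Lemma 4.1: periodicity of the solution of the (r,r,t)-slanted T-system
with 2×2-periodic initial data: if the initial data satisfy
`T(i+2,j−2,k) = T(i,j,k)` and `T(i+2t,j,k−2r) = T(i,j,k)` on the band, then for all points
with `μ ≥ 0`: `T(i+2,j−2,k) = T(i,j,k)` and `T(i+2t,j,k) = T(i,j,k+2r)`. -/
theorem Tsystem_periodicity_2x2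
    (r t : ℤ) (hr0 : 0 ≤ r) (hrt : r < t)
    (T : ℤ → ℤ → ℤ → ℝ)
    (hT0 : ∀ i j k : ℤ, 0 ≤ r * i + r * j + t * k → T i j k ≠ 0)
    (hT : ∀ i j k : ℤ, 2 * t ≤ r * i + r * j + t * (k + 1) →
      T i j (k + 1) * T i j (k - 1)
        = T (i + 1) j k * T (i - 1) j k + T i (j + 1) k * T i (j - 1) k)
    (hper1 : ∀ i j k : ℤ, 0 ≤ r * i + r * j + t * k → r * i + r * j + t * k < 2 * t →
      T (i + 2) (j - 2) k = T i j k)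
    (hper2 : ∀ i j k : ℤ, 0 ≤ r * i + r * j + t * k → r * i + r * j + t * k < 2 * t →
      T (i + 2 * t) j (k - 2 * r) = T i j k) :
    ∀ i j k : ℤ, 0 ≤ r * i + r * j + t * k →
      T (i + 2) (j - 2) k = T i j k ∧ T (i + 2 * t) j k = T i j (k + 2 * r) := by
  have habs : |r| < t := abs_lt.mpr ⟨by linarith, hrt⟩
  have hdiag := translate_eq_of_eqOn_band habs hT0 hT (a := 2) (b := -2) (c := 0) (by ring)
    (fun i j k h0 h1 => by simpa [← sub_eq_add_neg] using hper1 i j k h0 h1)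
  have hslant := translate_eq_of_eqOn_band habs hT0 hT (a := 2 * t) (b := 0) (c := -(2 * r))
    (by ring) (fun i j k h0 h1 => by simpa [← sub_eq_add_neg] using hper2 i j k h0 h1)
  intro i j k hμ
  constructor
  · simpa [← sub_eq_add_neg] using hdiag i j k hμ
  · have hμ' : 0 ≤ slantHeight r t i j (k + 2 * r) := by
      unfold slantHeight; nlinarith
    simpa using hslant i j (k + 2 * r) hμ'
end

section
/- Let r,t be integers with 0 < r < t and t − r even. Define η(m) = ⌊m/t⌋ + ⌊(m − (t−r)/2)/(t−r)⌋ − ⌊(m − (t−r))/(t−r)⌋ and φ(m) = η(m + r − t) − η(m) for m ∈ ℤ. Then for all m ∈ ℤ: φ(m + t) = φ(m); moreover φ(m) = −1 if m mod t ∈ {0, 1, …, t−r−1}, and φ(m) = 0 if m mod t ∈ {t−r, …, t−1}. -/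
private lemma floor_int_div (a b : ℤ) (hb : 0 < b) :
    ⌊((a : ℤ) : ℚ) / ((b : ℤ) : ℚ)⌋ = a / b := by
  lift b to ℕ using hb.le
  exact_mod_cast Rat.floor_intCast_div_natCast a b

private lemma sub_ediv_self (x s : ℤ) (hs : s ≠ 0) : (x - s) / s = x / s - 1 := by
  have := Int.add_mul_ediv_right x (-1) hs
  simpa [sub_eq_add_neg] using this

private lemma key (m s t : ℤ) (hs : 0 < s) (hst : s < t) :
    (m - s) / t = m / t + (if m % t < s then -1 else 0) := by
  have ht : (0:ℤ) < t := hs.trans hst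
  have hmod := Int.emod_add_mul_ediv m t
  have h1 : m - s = (m % t - s) + (m / t) * t := by linarith
  rw [h1, Int.add_mul_ediv_right _ _ ht.ne']
  have hlt := Int.emod_lt_of_pos m ht
  have hge := Int.emod_nonneg m ht.ne'
  split_ifs with h
  · have h2 : (m % t - s) + t ∈ Set.Ico (0:ℤ) t := ⟨by linarith, by linarith⟩
    have h3 : ((m % t - s) + t) / t = 0 := Int.ediv_eq_zero_of_lt h2.1 h2.2
    have h4 : ((m % t - s) + 1 * t) / t = (m % t - s) / t + 1 :=
      Int.add_mul_ediv_right _ _ ht.ne'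
    rw [one_mul] at h4
    omega
  · have h3 : (m % t - s) / t = 0 := Int.ediv_eq_zero_of_lt (by omega) (by omega)
    omega

/-- periodicity and values of `φ(m) = η(m+r−t) − η(m)` where
`η(m) = ⌊m/t⌋ + ⌊(m − (t−r)/2)/(t−r)⌋ − ⌊(m − (t−r))/(t−r)⌋`, for `0 < r < t`, `t−r` even:
`φ` is `t`-periodic, `φ(m) = −1` when `m mod t ∈ {0,…,t−r−1}` and `φ(m) = 0` when
`m mod t ∈ {t−r,…,t−1}`. -/
theorem phi_values
    (r t : ℤ) (hr0 : 0 < r) (hrt : r < t) (heven : Even (t - r))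
    (η φ : ℤ → ℤ)
    (hη : ∀ m : ℤ,
      η m = ⌊((m : ℤ) : ℚ) / ((t : ℤ) : ℚ)⌋
          + ⌊((m - (t - r) / 2 : ℤ) : ℚ) / ((t - r : ℤ) : ℚ)⌋
          - ⌊((m - (t - r) : ℤ) : ℚ) / ((t - r : ℤ) : ℚ)⌋)
    (hφ : ∀ m : ℤ, φ m = η (m + r - t) - η m) :
    ∀ m : ℤ,
      φ (m + t) = φ m ∧
      (m % t < t - r → φ m = -1) ∧
      (t - r ≤ m % t → φ m = 0) := by
  set s := t - r with hsdef
  have hs : 0 < s := by omega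
  have hst : s < t := by omega
  have ht : (0:ℤ) < t := hs.trans hst
  obtain ⟨u, hu⟩ := heven
  have hu2 : s = 2 * u := by omega
  have hu0 : 0 < u := by omega
  have hsu : s / 2 = u := by omega
  -- rewrite η in terms of ediv
  have hη' : ∀ m : ℤ, η m = m / t + (m - u) / s - m / s + 1 := by
    intro m
    rw [hη m, floor_int_div _ _ ht, floor_int_div _ _ hs, floor_int_div _ _ hs,
      hsu, sub_ediv_self m s hs.ne']
    ring
  -- φ m = (m - s)/t - m/t
  have hφ' : ∀ m : ℤ, φ m = (m - s) / t - m / t := by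
    intro m
    have hms : m + r - t = m - s := by omega
    rw [hφ m, hms, hη' (m - s), hη' m]
    have e1 : (m - s - u) = (m - u) - s := by ring
    rw [e1, sub_ediv_self (m - u) s hs.ne', sub_ediv_self m s hs.ne']
    ring
  intro m
  refine ⟨?_, ?_, ?_⟩
  · rw [hφ' (m + t), hφ' m]
    have e1 : m + t - s = (m - s) + 1 * t := by ring
    have e2 : m + t = m + 1 * t := by ring
    rw [e1, e2, Int.add_mul_ediv_right _ _ ht.ne', Int.add_mul_ediv_right _ _ ht.ne']
    ring
  · intro h
    rw [hφ' m, key m s t hs hst, if_pos h]; ring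
  · intro h
    rw [hφ' m, key m s t hs hst, if_neg (by omega)]; ring
end

section
/- Let r,t be integers with 0 < r < t and t − r even, and let b, c be positive real numbers. With η(m) = ⌊m/t⌋ + ⌊(m − (t−r)/2)/(t−r)⌋ − ⌊(m − (t−r))/(t−r)⌋, φ(m) = η(m+r−t) − η(m), μ(m) = 2·⌊(m+t)/(2t)⌋, μ'(m) = 2·⌊m/(2t)⌋ + 1, ψ(m) = μ(m+r−t) − μ(m) and ψ'(m) = μ'(m+r−t) − μ'(m), for every m ∈ ℤ one has ((b²+c²)/2)^φ(m) / (2·b^ψ(m)·c^ψ'(m)) + ((b²+c²)/2)^φ(m) / (2·c^ψ(m)·b^ψ'(m)) = 1, where powers of positive reals with integer exponents are used. (The two summands are the coefficients ℒ and ℛ = 1 − ℒ of the linearized T-system with 2×2-periodic (r,r,t)-slanted initial data; the identity expresses ℒ + ℛ = 1.) -/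
/-!
Write `s = t - r`, so `0 < s < t`. All floors are Euclidean divisions, and replacing `m` by `m - s`
lowers both `⌊·/s⌋` terms of `η` by exactly one, so `φ(m) = ⌊(m - s)/t⌋ - ⌊m/t⌋`.
Since `0 < s ≤ t`, this lies in `{0, -1}`; likewise `ψ(m), ψ'(m) ∈ {0, -2}`, and Hermite's identity
`⌊x/2t⌋ + ⌊(x + t)/2t⌋ = ⌊x/t⌋` gives `ψ(m) + ψ'(m) = 2φ(m)`. Hence either all exponents vanish and
the sum is `1/2 + 1/2`, or `φ(m) = -1` and `{ψ(m), ψ'(m)} = {0, -2}`, where the sum is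
`(b² + c²) / (2 · (b² + c²)/2) = 1`.
-/

lemma Rat.floor_intCast_div_intCast_of_nonneg (a : ℤ) {d : ℤ} (hd : 0 ≤ d) :
    ⌊(a : ℚ) / (d : ℚ)⌋ = a / d := by
  lift d to ℕ using hd
  exact_mod_cast Rat.floor_intCast_div_natCast a d

namespace Int

lemma sub_ediv_self {n : ℤ} (x : ℤ) (hn : n ≠ 0) : (x - n) / n = x / n - 1 := by
  rw [sub_ediv_of_dvd x (dvd_refl n), Int.ediv_self hn]

lemma sub_ediv_sub_ediv_eq_zero_or_neg_one {n s : ℤ} (x : ℤ) (hs : 0 ≤ s) (hsn : s ≤ n) :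
    (x - s) / n - x / n = 0 ∨ (x - s) / n - x / n = -1 := by
  obtain rfl | hn := (hs.trans hsn).eq_or_lt
  · obtain rfl : s = 0 := by omega
    simp
  have hle : (x - s) / n ≤ x / n := Int.ediv_le_ediv hn (by omega)
  have hge : x / n - 1 ≤ (x - s) / n := by
    rw [← sub_ediv_self x hn.ne']
    exact Int.ediv_le_ediv hn (by omega)
  omega

lemma ediv_two_mul_add_add_ediv_two_mul {t : ℤ} (x : ℤ) (ht : 0 < t) :
    x / (2 * t) + (x + t) / (2 * t) = x / t := by
  rw [mul_comm, ← ediv_ediv_of_nonneg ht.le, ← ediv_ediv_of_nonneg ht.le,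
    add_ediv_of_dvd_right (dvd_refl t), Int.ediv_self ht.ne']
  omega

end Int

lemma mean_sq_zpow_div_add_div_eq_one {b c : ℝ} (hb : b ≠ 0) (hc : c ≠ 0) {φ ψ ψ' : ℤ}
    (hφ : φ = 0 ∨ φ = -1) (hψ : ψ = 0 ∨ ψ = -2) (hψ' : ψ' = 0 ∨ ψ' = -2)
    (hsum : ψ + ψ' = 2 * φ) :
    ((b ^ 2 + c ^ 2) / 2) ^ φ / (2 * b ^ ψ * c ^ ψ')
      + ((b ^ 2 + c ^ 2) / 2) ^ φ / (2 * c ^ ψ * b ^ ψ') = 1 := by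
  have : b ^ 2 + c ^ 2 ≠ 0 := by positivity
  obtain ⟨rfl, rfl, rfl⟩ | ⟨rfl, rfl, rfl⟩ | ⟨rfl, rfl, rfl⟩ :
      (φ = 0 ∧ ψ = 0 ∧ ψ' = 0) ∨ (φ = -1 ∧ ψ = 0 ∧ ψ' = -2) ∨ (φ = -1 ∧ ψ = -2 ∧ ψ' = 0) := by
    omega
  · norm_num
  · field_simp
    ring
  · field_simp

theorem L_plus_R_eq_one_general
    (r t : ℤ) (hr0 : 0 < r) (hrt : r < t)
    (b c : ℝ) (hb : 0 < b) (hc : 0 < c)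
    (η φ μ μ' ψ ψ' : ℤ → ℤ)
    (hη : ∀ m : ℤ,
      η m = ⌊((m : ℤ) : ℚ) / ((t : ℤ) : ℚ)⌋
          + ⌊((m - (t - r) / 2 : ℤ) : ℚ) / ((t - r : ℤ) : ℚ)⌋
          - ⌊((m - (t - r) : ℤ) : ℚ) / ((t - r : ℤ) : ℚ)⌋)
    (hφ : ∀ m : ℤ, φ m = η (m + r - t) - η m)
    (hμ : ∀ m : ℤ, μ m = 2 * ⌊((m + t : ℤ) : ℚ) / ((2 * t : ℤ) : ℚ)⌋)
    (hμ' : ∀ m : ℤ, μ' m = 2 * ⌊((m : ℤ) : ℚ) / ((2 * t : ℤ) : ℚ)⌋ + 1)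
    (hψ : ∀ m : ℤ, ψ m = μ (m + r - t) - μ m)
    (hψ' : ∀ m : ℤ, ψ' m = μ' (m + r - t) - μ' m) :
    ∀ m : ℤ,
      ((b ^ 2 + c ^ 2) / 2) ^ φ m / (2 * b ^ ψ m * c ^ ψ' m)
        + ((b ^ 2 + c ^ 2) / 2) ^ φ m / (2 * c ^ ψ m * b ^ ψ' m) = 1 := by
  intro m
  set s := t - r
  have hs : 0 < s := by omega
  have ht : 0 < t := by omega
  have h2t : 0 < 2 * t := by omega
  have hms : m + r - t = m - s := by omega
  have hφm : φ m = (m - s) / t - m / t := by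
    simp only [hφ, hη, hms, Rat.floor_intCast_div_intCast_of_nonneg _ hs.le,
      Rat.floor_intCast_div_intCast_of_nonneg _ ht.le]
    rw [sub_right_comm m s (s / 2), Int.sub_ediv_self (m - s / 2) hs.ne',
      Int.sub_ediv_self (m - s) hs.ne']
    ring
  have hψm : ψ m = 2 * ((m - s + t) / (2 * t) - (m + t) / (2 * t)) := by
    simp only [hψ, hμ, hms, Rat.floor_intCast_div_intCast_of_nonneg _ h2t.le]
    ring
  have hψ'm : ψ' m = 2 * ((m - s) / (2 * t) - m / (2 * t)) := by
    simp only [hψ', hμ', hms, Rat.floor_intCast_div_intCast_of_nonneg _ h2t.le]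
    ring
  have hsum : ψ m + ψ' m = 2 * φ m := by
    rw [hψm, hψ'm, hφm, ← Int.ediv_two_mul_add_add_ediv_two_mul m ht,
      ← Int.ediv_two_mul_add_add_ediv_two_mul (m - s) ht]
    ring
  have hφ_range := Int.sub_ediv_sub_ediv_eq_zero_or_neg_one m hs.le (by omega : s ≤ t)
  have hψ_range := Int.sub_ediv_sub_ediv_eq_zero_or_neg_one (m + t) hs.le (by omega : s ≤ 2 * t)
  have hψ'_range := Int.sub_ediv_sub_ediv_eq_zero_or_neg_one m hs.le (by omega : s ≤ 2 * t)
  rw [sub_add_eq_add_sub] at hψm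
  exact mean_sq_zpow_div_add_div_eq_one hb.ne' hc.ne' (by omega) (by omega) (by omega) hsum

/-- the identity `ℒ + ℛ = 1` for the coefficients of the linearized T-system
with 2×2-periodic (r,r,t)-slanted initial data:
`((b²+c²)/2)^φ(m) / (2 b^ψ(m) c^ψ'(m)) + ((b²+c²)/2)^φ(m) / (2 c^ψ(m) b^ψ'(m)) = 1`. -/
theorem L_plus_R_eq_one
    (r t : ℤ) (hr0 : 0 < r) (hrt : r < t) (heven : Even (t - r))
    (b c : ℝ) (hb : 0 < b) (hc : 0 < c)
    (η φ μ μ' ψ ψ' : ℤ → ℤ)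
    (hη : ∀ m : ℤ,
      η m = ⌊((m : ℤ) : ℚ) / ((t : ℤ) : ℚ)⌋
          + ⌊((m - (t - r) / 2 : ℤ) : ℚ) / ((t - r : ℤ) : ℚ)⌋
          - ⌊((m - (t - r) : ℤ) : ℚ) / ((t - r : ℤ) : ℚ)⌋)
    (hφ : ∀ m : ℤ, φ m = η (m + r - t) - η m)
    (hμ : ∀ m : ℤ, μ m = 2 * ⌊((m + t : ℤ) : ℚ) / ((2 * t : ℤ) : ℚ)⌋)
    (hμ' : ∀ m : ℤ, μ' m = 2 * ⌊((m : ℤ) : ℚ) / ((2 * t : ℤ) : ℚ)⌋ + 1)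
    (hψ : ∀ m : ℤ, ψ m = μ (m + r - t) - μ m)
    (hψ' : ∀ m : ℤ, ψ' m = μ' (m + r - t) - μ' m) :
    ∀ m : ℤ,
      ((b ^ 2 + c ^ 2) / 2) ^ φ m / (2 * b ^ ψ m * c ^ ψ' m)
        + ((b ^ 2 + c ^ 2) / 2) ^ φ m / (2 * c ^ ψ m * b ^ ψ' m) = 1 :=
  L_plus_R_eq_one_general r t hr0 hrt b c hb hc η φ μ μ' ψ ψ' hη hφ hμ hμ' hψ hψ'
end
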